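/- If L is a levellised (n+1)-lattice with n > 1, then L̄ = L \ {n} (removing the last-labelled atom) is a levellised n-lattice, and the depth of every element i with 1 ≤ i < n is the same in L̄ as in L. -/

import Mathlib

/-!
Depth strictly increases along a strict descent, while in a levellised lattice it weakly increases
with the label among nonzero elements. Hence along any strict inequality `x < y` with `x ≠ 0`,
the label of `y` is smaller than that of `x`; in particular the last label `n` is an atom, with
only `0` below it. So no join of two other elements is `n`, a meet equal to `n` can be replaced by
`0`, and a strictly descending chain from `1` through `n` can only continue to `0`: the chains from
`1` to any `i ∉ {0, n}`, and hence the depths, are the same in `L` and in `L̄`.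
-/

namespace PaperLattice

variable {N : ℕ}

/-- Depth: one less than the maximum length of a chain from `t` down to `a` w.r.t. `le`. -/
noncomputable def dep (le : Fin N → Fin N → Prop) (t a : Fin N) : ℕ :=
  sSup {k | ∃ l : List (Fin N), List.Chain' (fun x y => le y x ∧ y ≠ x) l ∧
    l.head? = some t ∧ l.getLast? = some a ∧ l.length = k + 1}

/-- The `d`-th level: elements of depth `d`. -/
noncomputable def lev (le : Fin N → Fin N → Prop) (t : Fin N) (d : ℕ) : Set (Fin N) :=
  {a | dep le t a = d}

/-- A labelled poset is levellised if depth is monotone in the nonzero labels. -/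
def Levellised (le : Fin N → Fin N → Prop) (t : Fin N) : Prop :=
  ∀ i j : Fin N, 0 < (i : ℕ) → (i : ℕ) ≤ (j : ℕ) → dep le t i ≤ dep le t j

def lt' (le : Fin N → Fin N → Prop) (a b : Fin N) : Prop := le a b ∧ a ≠ b

/-- `b` covers `a`. -/
def CovByRel (le : Fin N → Fin N → Prop) (a b : Fin N) : Prop :=
  lt' le a b ∧ ∀ x, lt' le a x → lt' le x b → False

/-- The covering set of `a`. -/
def cov (le : Fin N → Fin N → Prop) (a : Fin N) : Set (Fin N) := {b | CovByRel le a b}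

/-- The up-set of `A`. -/
def upset (le : Fin N → Fin N → Prop) (A : Set (Fin N)) : Set (Fin N) :=
  {x | ∃ a ∈ A, le a x}

def AntichainRel (le : Fin N → Fin N → Prop) (A : Set (Fin N)) : Prop :=
  ∀ a ∈ A, ∀ b ∈ A, a ≠ b → ¬ le a b

/-- Binary weight of a set of labels. -/
noncomputable def wt (A : Set (Fin N)) : ℕ :=
  ∑ j : Fin N, A.indicator (fun j => 2 ^ (j : ℕ)) j

/-- `z` is a bottom and `o` a top for `le`. -/
def Bounds (le : Fin N → Fin N → Prop) (z o : Fin N) : Prop :=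
  (∀ a, le z a) ∧ (∀ a, le a o)

/-- The order obtained from `le` by adding `m` new atoms, the `i`-th having covering set `A i`. -/
def extLe {n m : ℕ} (le : Fin n → Fin n → Prop) (A : Fin m → Set (Fin n)) :
    Fin (n + m) → Fin (n + m) → Prop := fun x y =>
  if hx : (x : ℕ) < n then
    if hy : (y : ℕ) < n then le ⟨x, hx⟩ ⟨y, hy⟩
    else (x : ℕ) = 0
  else
    if hy : (y : ℕ) < n then
      (⟨y, hy⟩ : Fin n) ∈ upset le (A ⟨(x : ℕ) - n, by have := x.isLt; omega⟩)
    else x = y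

/-- The relabelled order `π(L)`. -/
def permLe {n : ℕ} (π : Equiv.Perm (Fin n)) (le : Fin n → Fin n → Prop) :
    Fin n → Fin n → Prop := fun a b => le (π.symm a) (π.symm b)

open List

section

def descChainLengths (le : Fin N → Fin N → Prop) (t a : Fin N) : Set ℕ :=
  {k | ∃ l : List (Fin N), l.IsChain (fun x y => le y x ∧ y ≠ x) ∧
    l.head? = some t ∧ l.getLast? = some a ∧ l.length = k + 1}

theorem dep_eq_sSup (le : Fin N → Fin N → Prop) (t a : Fin N) :
    dep le t a = sSup (descChainLengths le t a) :=
  rfl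

variable (P : PartialOrder (Fin N))

theorem nodup_of_isChain {l : List (Fin N)} (hl : l.IsChain (fun x y => P.le y x ∧ y ≠ x)) :
    l.Nodup := by
  have : Trans (fun x y : Fin N => P.le y x ∧ y ≠ x) (fun x y => P.le y x ∧ y ≠ x)
      (fun x y => P.le y x ∧ y ≠ x) :=
    ⟨fun ⟨hba, hne⟩ ⟨hcb, _⟩ =>
      ⟨P.le_trans _ _ _ hcb hba, fun hca => hne (P.le_antisymm _ _ hba (hca ▸ hcb))⟩⟩
  exact (isChain_iff_pairwise.mp hl).imp fun h => h.2.symm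

theorem bddAbove_descChainLengths (t a : Fin N) : BddAbove (descChainLengths P.le t a) := by
  refine ⟨N, fun k ⟨l, hl, _, _, hlen⟩ => ?_⟩
  have := (nodup_of_isChain P hl).length_le_card
  rw [Fintype.card_fin] at this
  omega

theorem descChainLengths_nonempty {t a : Fin N} (hat : P.le a t) :
    (descChainLengths P.le t a).Nonempty := by
  by_cases hta : a = t
  · exact ⟨0, [t], isChain_singleton t, rfl, hta ▸ rfl, rfl⟩
  · exact ⟨1, [t, a], isChain_pair.mpr ⟨hat, hta⟩, rfl, rfl, rfl⟩

theorem dep_lt_dep {t x y : Fin N} (hyt : P.le y t) (hxy : P.le x y) (hne : x ≠ y) :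
    dep P.le t y < dep P.le t x := by
  obtain ⟨l, hl, hhead, hlast, hlen⟩ :=
    Nat.sSup_mem (descChainLengths_nonempty P hyt) (bddAbove_descChainLengths P t y)
  obtain ⟨l, rfl⟩ := getLast?_eq_some_iff.mp hlast
  have hext : dep P.le t y + 1 ∈ descChainLengths P.le t x := by
    refine ⟨l ++ [y, x], isChain_append_cons_cons.mpr ⟨hl, ⟨hxy, hne⟩, isChain_singleton x⟩,
      ?_, by simp, ?_⟩
    · rw [← hhead]
      cases l <;> rfl
    · simp only [length_append, length_cons, length_nil] at hlen ⊢
      rw [dep_eq_sSup]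
      omega
  exact Nat.lt_of_succ_le (le_csSup (bddAbove_descChainLengths P t x) hext)

theorem le_of_mem_of_isChain {l : List (Fin N)} {a x : Fin N}
    (hl : l.IsChain (fun x y => P.le y x ∧ y ≠ x)) (hlast : l.getLast? = some a) (hx : x ∈ l) :
    P.le a x :=
  hl.backwards_induction (P.le a ·) l (fun _ _ hyx hay => P.le_trans _ _ _ hay hyx.1)
    (fun _ => (getLast_of_getLast?_eq_some hlast).symm ▸ P.le_refl a) x hx

theorem Levellised.val_lt_of_lt {t : Fin N} (hlev : Levellised P.le t) (htop : ∀ a, P.le a t)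
    {x y : Fin N} (hxy : P.le x y) (hne : x ≠ y) (hx : 0 < (x : ℕ)) : (y : ℕ) < x := by
  by_contra! hle
  exact (hlev x y hx hle).not_gt (dep_lt_dep P (htop y) hxy hne)

end

theorem dep_eq_dep_of_injective {M N : ℕ} (r : Fin M → Fin M → Prop) (s : Fin N → Fin N → Prop)
    {f : Fin M → Fin N} (hf : Function.Injective f) (hrs : ∀ a b, r a b ↔ s (f a) (f b))
    (t a : Fin M)
    (hrange : ∀ l : List (Fin N), l.IsChain (fun x y => s y x ∧ y ≠ x) →
      l.head? = some (f t) → l.getLast? = some (f a) → ∀ x ∈ l, x ∈ Set.range f) :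
    dep r t a = dep s (f t) (f a) := by
  have hmap : ∀ (l : List (Fin M)) (k : ℕ),
      (l.IsChain (fun x y => r y x ∧ y ≠ x) ∧ l.head? = some t ∧ l.getLast? = some a ∧
        l.length = k + 1) ↔
      ((l.map f).IsChain (fun x y => s y x ∧ y ≠ x) ∧ (l.map f).head? = some (f t) ∧
        (l.map f).getLast? = some (f a) ∧ (l.map f).length = k + 1) := by
    intro l k
    rw [isChain_map, head?_map, getLast?_map, length_map, ← Option.map_some, ← Option.map_some,
      (Option.map_injective hf).eq_iff, (Option.map_injective hf).eq_iff]
    exact and_congr_left' (IsChain.iff fun x y => and_congr (hrs y x) hf.ne_iff.symm)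
  rw [dep_eq_sSup, dep_eq_sSup]
  congr 1
  ext k
  constructor
  · rintro ⟨l, hl⟩
    exact ⟨l.map f, (hmap l k).mp hl⟩
  · rintro ⟨l, hl, hhead, hlast, hlen⟩
    obtain ⟨l', rfl⟩ : l ∈ Set.range (map f) := by
      rw [Set.range_list_map]
      exact hrange l hl hhead hlast
    exact ⟨l', (hmap l' k).mpr ⟨hl, hhead, hlast, hlen⟩⟩

theorem Levellised.val_eq_zero_of_lt_last {n : ℕ} (P : PartialOrder (Fin (n + 1))) {t : Fin (n + 1)}
    (hlev : Levellised P.le t) (htop : ∀ a, P.le a t) {x : Fin (n + 1)}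
    (hx : P.le x (Fin.last n)) (hne : x ≠ Fin.last n) : (x : ℕ) = 0 := by
  by_contra hx0
  exact (Fin.le_last x).not_gt (hlev.val_lt_of_lt P htop hx hne (Nat.pos_of_ne_zero hx0))

theorem forall_mem_range_castSucc_of_isChain {n : ℕ} (P : PartialOrder (Fin (n + 1)))
    {z : Fin (n + 1)} (hatom : ∀ x, P.le x (Fin.last n) → x ≠ Fin.last n → x = z)
    {l : List (Fin (n + 1))} {a : Fin (n + 1)} (hl : l.IsChain (fun x y => P.le y x ∧ y ≠ x))
    (hlast : l.getLast? = some a) (haz : a ≠ z) (ha : a ≠ Fin.last n) :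
    ∀ x ∈ l, x ∈ Set.range Fin.castSucc := by
  rintro x hx
  rw [Set.mem_range, Fin.exists_castSucc_eq]
  rintro rfl
  exact haz (hatom a (le_of_mem_of_isChain P hl hlast hx) ha)

section EraseLast

variable {n : ℕ} (L : Lattice (Fin (n + 1))) {z : Fin n}

theorem sup_castSucc_ne_last (hatom : ∀ x, L.le x (Fin.last n) → x ≠ Fin.last n → x = z.castSucc)
    (a b : Fin n) : L.sup a.castSucc b.castSucc ≠ Fin.last n := by
  intro h
  have ha := hatom _ (h ▸ L.le_sup_left _ _) (Fin.castSucc_ne_last a)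
  have hb := hatom _ (h ▸ L.le_sup_right _ _) (Fin.castSucc_ne_last b)
  have hidem : L.sup z.castSucc z.castSucc = z.castSucc :=
    L.le_antisymm _ _ (L.sup_le _ _ _ (L.le_refl _) (L.le_refl _)) (L.le_sup_left _ _)
  rw [ha, hb, hidem] at h
  exact Fin.castSucc_ne_last z h

abbrev eraseLast (hz : ∀ a, L.le z.castSucc a)
    (hatom : ∀ x, L.le x (Fin.last n) → x ≠ Fin.last n → x = z.castSucc) : Lattice (Fin n) where
  le a b := L.le a.castSucc b.castSucc
  lt a b := L.le a.castSucc b.castSucc ∧ ¬ L.le b.castSucc a.castSucc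
  le_refl a := L.le_refl _
  le_trans _ _ _ := L.le_trans _ _ _
  le_antisymm a b hab hba := Fin.castSucc_injective n (L.le_antisymm _ _ hab hba)
  sup a b := (L.sup a.castSucc b.castSucc).castPred (sup_castSucc_ne_last L hatom a b)
  le_sup_left a b := by
    show L.le _ (Fin.castSucc (Fin.castPred _ _))
    rw [Fin.castSucc_castPred]
    exact L.le_sup_left _ _
  le_sup_right a b := by
    show L.le _ (Fin.castSucc (Fin.castPred _ _))
    rw [Fin.castSucc_castPred]
    exact L.le_sup_right _ _
  sup_le a b c hac hbc := by
    show L.le (Fin.castSucc (Fin.castPred _ _)) _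
    rw [Fin.castSucc_castPred]
    exact L.sup_le _ _ _ hac hbc
  -- When the meet in `L` is the atom `n`, the only common lower bound left is the bottom.
  inf a b :=
    if h : L.inf a.castSucc b.castSucc = Fin.last n then z
    else (L.inf a.castSucc b.castSucc).castPred h
  inf_le_left a b := by
    show L.le (Fin.castSucc (dite _ _ _)) _
    split_ifs
    · exact hz _
    · rw [Fin.castSucc_castPred]
      exact L.inf_le_left _ _
  inf_le_right a b := by
    show L.le (Fin.castSucc (dite _ _ _)) _
    split_ifs
    · exact hz _
    · rw [Fin.castSucc_castPred]
      exact L.inf_le_right _ _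
  le_inf c a b hca hcb := by
    show L.le _ (Fin.castSucc (dite _ _ _))
    split_ifs with h
    · have hc := hatom _ (h ▸ L.le_inf _ _ _ hca hcb) (Fin.castSucc_ne_last c)
      exact hc ▸ L.le_refl _
    · rw [Fin.castSucc_castPred]
      exact L.le_inf _ _ _ hca hcb

end EraseLast

theorem statement2 {n : ℕ} (hn : 1 < n) (L : Lattice (Fin (n + 1)))
    (hb : Bounds L.le ⟨0, by omega⟩ ⟨1, by omega⟩)
    (hlev : Levellised L.le ⟨1, by omega⟩) :
    ∃ M : Lattice (Fin n),
      (∀ a b : Fin n, M.le a b ↔ L.le a.castSucc b.castSucc) ∧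
      Bounds M.le ⟨0, by omega⟩ ⟨1, by omega⟩ ∧
      Levellised M.le ⟨1, by omega⟩ ∧
      ∀ i : Fin n, 1 ≤ (i : ℕ) →
        dep M.le ⟨1, by omega⟩ i = dep L.le ⟨1, by omega⟩ i.castSucc := by
  have hatom : ∀ x, L.le x (Fin.last n) → x ≠ Fin.last n → x = Fin.castSucc ⟨0, by omega⟩ :=
    fun x hx hne => Fin.ext (hlev.val_eq_zero_of_lt_last L.toPartialOrder hb.2 hx hne)
  let M := eraseLast L (z := ⟨0, by omega⟩) hb.1 hatom
  have hdep : ∀ i : Fin n, 1 ≤ (i : ℕ) →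
      dep M.le ⟨1, by omega⟩ i = dep L.le ⟨1, by omega⟩ i.castSucc := fun i hi =>
    dep_eq_dep_of_injective M.le L.le (Fin.castSucc_injective n) (fun _ _ => Iff.rfl) _ i
      fun _ hl _ hlast => forall_mem_range_castSucc_of_isChain L.toPartialOrder hatom hl hlast
        (Fin.ne_of_val_ne (Nat.one_le_iff_ne_zero.mp hi)) (Fin.castSucc_ne_last i)
  refine ⟨M, fun _ _ => Iff.rfl, ⟨fun _ => hb.1 _, fun _ => hb.2 _⟩, fun i j hi hij => ?_, hdep⟩
  rw [hdep i hi, hdep j (hi.trans_le hij)]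
  exact hlev _ _ hi hij

end PaperLattice
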